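/- arXiv:1412.3748 — 9 statements merged into one kernel-verified Lean document; each statement's English description precedes it below -/
import Mathlib

section
/- For an Arf numerical semigroup, the embedding dimension equals the multiplicity. -/
/-- A numerical semigroup: subset of ℕ closed under addition, containing 0, cofinite. -/
def IsNumericalSemigroup (S : Set ℕ) : Prop :=
  0 ∈ S ∧ (∀ a ∈ S, ∀ b ∈ S, a + b ∈ S) ∧ (Sᶜ : Set ℕ).Finite

/-- The Arf condition: s + t - u ∈ S whenever s, t, u ∈ S and s, t ≥ u. -/
def IsArf (S : Set ℕ) : Prop :=
  ∀ s ∈ S, ∀ t ∈ S, ∀ u ∈ S, u ≤ s → u ≤ t → s + t - u ∈ S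

/-- S(n) = {s - n : s ∈ S, s ≥ n}. -/
def shiftSet (S : Set ℕ) (n : ℕ) : Set ℕ := {m : ℕ | m + n ∈ S}

/-- A minimal generator: a nonzero element of S not a sum of two nonzero elements of S. -/
def IsMinGen (S : Set ℕ) (x : ℕ) : Prop :=
  x ∈ S ∧ x ≠ 0 ∧ ¬ ∃ a ∈ S, ∃ b ∈ S, a ≠ 0 ∧ b ≠ 0 ∧ x = a + b

/-- The minimal generating set of S. -/
def minGens (S : Set ℕ) : Set ℕ := {x | IsMinGen S x}

/-- The multiplicity: the smallest nonzero element of S. -/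
noncomputable def multS (S : Set ℕ) : ℕ := sInf {m | m ∈ S ∧ m ≠ 0}

/-- The embedding dimension: the number of minimal generators of S. -/
noncomputable def embDim (S : Set ℕ) : ℕ := (minGens S).ncard

theorem stmt_2 (S : Set ℕ) (hS : IsNumericalSemigroup S) (hArf : IsArf S) :
    embDim S = multS S := by
  obtain ⟨h0, hadd, hcof⟩ := hS
  obtain ⟨N, hN⟩ := hcof.bddAbove
  have hbig : ∀ n, N < n → n ∈ S := by
    intro n hn
    by_contra h
    exact absurd (hN h) (not_le.mpr hn)
  set m := multS S with hm
  have hne : {x | x ∈ S ∧ x ≠ 0}.Nonempty :=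
    ⟨N + 1, hbig _ (Nat.lt_succ_self N), Nat.succ_ne_zero N⟩
  have hmS : m ∈ S ∧ m ≠ 0 := Nat.sInf_mem hne
  have hmpos : 0 < m := Nat.pos_of_ne_zero hmS.2
  have hmin : ∀ x ∈ S, x ≠ 0 → m ≤ x := fun x hx hx0 => Nat.sInf_le ⟨hx, hx0⟩
  have hmul : ∀ k : ℕ, m * k ∈ S := by
    intro k
    induction k with
    | zero => simpa using h0
    | succ n ih =>
      have := hadd _ ih _ hmS.1
      simpa [Nat.mul_succ] using this
  set g : ℕ → ℕ := fun r => sInf {x | x ∈ S ∧ x % m = r ∧ x ≠ 0} with hg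
  have hgmem : ∀ r < m, g r ∈ S ∧ g r % m = r ∧ g r ≠ 0 := by
    intro r hr
    have hne' : {x | x ∈ S ∧ x % m = r ∧ x ≠ 0}.Nonempty :=
      ⟨m * (N + 1) + r, hbig _ (by nlinarith), by
        simp [Nat.mul_add_mod, Nat.mod_eq_of_lt hr], by nlinarith⟩
    exact Nat.sInf_mem hne'
  -- Claim A : each g r is a minimal generator (uses Arf)
  have hA : ∀ r < m, g r ∈ minGens S := by
    intro r hr
    obtain ⟨hgS, hgmod, hg0⟩ := hgmem r hr
    refine ⟨hgS, hg0, ?_⟩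
    rintro ⟨a, ha, b, hb, ha0, hb0, hab⟩
    have hma := hmin a ha ha0
    have hmb := hmin b hb hb0
    have h1 : a + b - m ∈ S := hArf a ha b hb m hmS.1 hma hmb
    have h2 : (a + b - m) % m = r := by
      calc (a + b - m) % m = (a + b - m + m) % m := (Nat.add_mod_right _ _).symm
        _ = g r % m := by rw [Nat.sub_add_cancel (by omega), ← hab]
        _ = r := hgmod
    have h3 : a + b - m ≠ 0 := by omega
    have hle : g r ≤ a + b - m := Nat.sInf_le ⟨h1, h2, h3⟩
    omega
  -- Claim B : every minimal generator is the least nonzero element of its class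
  have hB : ∀ x ∈ minGens S, x = g (x % m) := by
    rintro x ⟨hxS, hx0, hxng⟩
    have hle : g (x % m) ≤ x := Nat.sInf_le ⟨hxS, rfl, hx0⟩
    rcases eq_or_lt_of_le hle with h | h
    · exact h.symm
    · exfalso
      obtain ⟨hgS, hgmod, hg0⟩ := hgmem (x % m) (Nat.mod_lt x hmpos)
      have hmod : g (x % m) ≡ x [MOD m] := by
        exact hgmod
      have hdvd : m ∣ x - g (x % m) := (Nat.modEq_iff_dvd' hle).mp hmod
      obtain ⟨k, hk⟩ := hdvd
      have hgm := hmin _ hgS hg0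
      have hk1 : 1 ≤ k := by
        rcases Nat.eq_zero_or_pos k with h' | h'
        · subst h'; simp at hk; omega
        · exact h'
      have e : m * (k - 1) + m = m * k := by
        rw [← Nat.mul_succ]
        congr 1
        omega
      have hxm : x - m = g (x % m) + m * (k - 1) := by omega
      have hxmS : x - m ∈ S := by
        rw [hxm]; exact hadd _ hgS _ (hmul (k - 1))
      apply hxng
      refine ⟨m, hmS.1, x - m, hxmS, hmS.2, ?_, by omega⟩
      omega
  have hEq : minGens S = g '' Set.Iio m := by
    ext x
    constructor
    · intro hx
      exact ⟨x % m, Nat.mod_lt x hmpos, (hB x hx).symm⟩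
    · rintro ⟨r, hr, rfl⟩
      exact hA r hr
  have hinj : Set.InjOn g (Set.Iio m) := by
    intro a ha b hb hab
    have h1 := (hgmem a ha).2.1
    have h2 := (hgmem b hb).2.1
    rw [← h1, ← h2, hab]
  calc embDim S = (g '' Set.Iio m).ncard := by rw [embDim, hEq]
    _ = (Set.Iio m).ncard := Set.ncard_image_of_injOn hinj
    _ = m := by rw [← Finset.coe_Iio, Set.ncard_coe_finset, Nat.card_Iio]
end

section
/- Let S be an Arf numerical semigroup with multiplicity n₁ and minimal generators n₁ < n₂ < … < n_k. Then the blowup S' of S (the semigroup generated by n₁, n₂ - n₁, …, n_k - n₁) equals S(n₁) = {s - n₁ : s ∈ S, s ≥ n₁}. -/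
theorem stmt_4 (S : Set ℕ) (hS : IsNumericalSemigroup S) (hArf : IsArf S)
    (k : ℕ) (hk : 0 < k) (n : Fin k → ℕ) (hmono : StrictMono n)
    (hgens : minGens S = Set.range n) :
    (AddSubmonoid.closure (insert (n ⟨0, hk⟩) (Set.range fun i => n i - n ⟨0, hk⟩)) : Set ℕ)
      = shiftSet S (n ⟨0, hk⟩) := by
  obtain ⟨h0S, haddS, -⟩ := hS
  set m := n ⟨0, hk⟩ with hm
  have hmgen : IsMinGen S m := by
    have : m ∈ minGens S := by rw [hgens]; exact ⟨_, rfl⟩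
    exact this
  obtain ⟨hmS, hm0, -⟩ := hmgen
  have hmin : ∀ s ∈ S, s ≠ 0 → m ≤ s := by
    intro s hs hs0
    set T := {x | x ∈ S ∧ x ≠ 0} with hT
    have hTmem : sInf T ∈ T := Nat.sInf_mem ⟨m, hmS, hm0⟩
    have hμgen : IsMinGen S (sInf T) := by
      refine ⟨hTmem.1, hTmem.2, ?_⟩
      rintro ⟨a, ha, b, hb, ha0, hb0, hab⟩
      have h1 : sInf T ≤ a := Nat.sInf_le ⟨ha, ha0⟩
      have h2 : sInf T ≤ b := Nat.sInf_le ⟨hb, hb0⟩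
      have := hTmem.2
      omega
    have hr : sInf T ∈ Set.range n := by rw [← hgens]; exact hμgen
    obtain ⟨i, hi⟩ := hr
    have h0i : m ≤ n i := hmono.monotone (Fin.le_def.mpr (Nat.zero_le _))
    have hml : m ≤ sInf T := by rw [← hi]; exact h0i
    exact hml.trans (Nat.sInf_le ⟨hs, hs0⟩)
  set G := insert m (Set.range fun i => n i - m) with hG
  apply le_antisymm
  · -- closure G ⊆ shiftSet S m
    have : AddSubmonoid.closure G ≤
        { carrier := shiftSet S m
          zero_mem' := by show (0 : ℕ) + m ∈ S; simpa using hmS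
          add_mem' := by
            intro a b ha hb
            have h := hArf (a + m) ha (b + m) hb m hmS (by omega) (by omega)
            have : (a + m) + (b + m) - m = (a + b) + m := by omega
            rwa [this] at h } := by
      rw [AddSubmonoid.closure_le]
      rintro y (rfl | ⟨i, rfl⟩)
      · exact haddS m hmS m hmS
      · show (n i - m) + m ∈ S
        have h0i : m ≤ n i := hmono.monotone (Fin.le_def.mpr (Nat.zero_le _))
        have hni : n i ∈ S := by
          have : n i ∈ minGens S := by rw [hgens]; exact ⟨i, rfl⟩
          exact this.1
        have : (n i - m) + m = n i := by omega
        rwa [this]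
    exact this
  · -- shiftSet S m ⊆ closure G
    have key : ∀ s, s ∈ S → s ≠ 0 → (s - m) ∈ AddSubmonoid.closure G := by
      intro s
      induction s using Nat.strong_induction_on with
      | _ s ih =>
        intro hs hs0
        by_cases hgen : IsMinGen S s
        · have hr : s ∈ Set.range n := by rw [← hgens]; exact hgen
          obtain ⟨i, hi⟩ := hr
          exact AddSubmonoid.subset_closure (Or.inr ⟨i, by show n i - m = s - m; rw [hi]⟩)
        · have hdec : ∃ a ∈ S, ∃ b ∈ S, a ≠ 0 ∧ b ≠ 0 ∧ s = a + b := by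
            by_contra h; exact hgen ⟨hs, hs0, h⟩
          obtain ⟨a, ha, b, hb, ha0, hb0, hab⟩ := hdec
          have hma := hmin a ha ha0
          have hmb := hmin b hb hb0
          have hm0' : 0 < m := Nat.pos_of_ne_zero hm0
          have iha := ih a (by omega) ha ha0
          have ihb := ih b (by omega) hb hb0
          have hmem : m ∈ AddSubmonoid.closure G :=
            AddSubmonoid.subset_closure (Set.mem_insert _ _)
          have hsum : (a - m) + (b - m) + m ∈ AddSubmonoid.closure G :=
            add_mem (add_mem iha ihb) hmem
          have heq : (a - m) + (b - m) + m = s - m := by omega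
          rwa [heq] at hsum
    intro x hx
    have hxm : x + m ∈ S := hx
    have h := key (x + m) hxm (by omega)
    have : x + m - m = x := by omega
    rwa [this] at h
end

section
/- The blowup of an Arf numerical semigroup is again an Arf numerical semigroup. -/
theorem stmt_6 (S : Set ℕ) (hS : IsNumericalSemigroup S) (hArf : IsArf S)
    (n₁ : ℕ) (hn₁ : IsLeast {m | m ∈ S ∧ m ≠ 0} n₁) :
    IsNumericalSemigroup (shiftSet S n₁) ∧ IsArf (shiftSet S n₁) := by
  obtain ⟨⟨hn₁S, hn₁0⟩, _⟩ := hn₁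
  refine ⟨⟨?_, ?_, ?_⟩, ?_⟩
  · simpa [shiftSet] using hn₁S
  · intro a ha b hb
    have := hArf _ ha _ hb _ hn₁S (by omega) (by omega)
    simpa [shiftSet, show a + n₁ + (b + n₁) - n₁ = a + b + n₁ by omega] using this
  · have : (shiftSet S n₁)ᶜ ⊆ (fun m => m + n₁) ⁻¹' Sᶜ := fun m hm => hm
    exact Set.Finite.subset (Set.Finite.preimage (add_left_injective n₁).injOn hS.2.2) this
  · intro s hs t ht u hu hus hut
    have := hArf _ hs _ ht _ hu (by omega) (by omega)
    simpa [shiftSet, show s + n₁ + (t + n₁) - (u + n₁) = s + t - u + n₁ by omega] using this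
end

section
/- For every n in an Arf numerical semigroup S, the set S(n) = {s - n : s ∈ S, s ≥ n} is an Arf numerical semigroup. -/
theorem stmt_7 (S : Set ℕ) (hS : IsNumericalSemigroup S) (hArf : IsArf S)
    (n : ℕ) (hn : n ∈ S) :
    IsNumericalSemigroup (shiftSet S n) ∧ IsArf (shiftSet S n) := by
  obtain ⟨h0, hadd, hfin⟩ := hS
  refine ⟨⟨?_, ?_, ?_⟩, ?_⟩
  · simpa [shiftSet] using hn
  · intro a ha b hb
    have := hArf (a + n) ha (b + n) hb n hn (by omega) (by omega)
    simpa [shiftSet, show a + n + (b + n) - n = a + b + n by omega] using this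
  · have : (shiftSet S n)ᶜ ⊆ (fun m => m - n) '' Sᶜ := by
      intro m hm
      exact ⟨m + n, hm, by simp⟩
    exact (hfin.image _).subset this
  · intro s hs t ht u hu hus hut
    have := hArf (s + n) hs (t + n) ht (u + n) hu (by omega) (by omega)
    simpa [shiftSet, show s + n + (t + n) - (u + n) = s + t - u + n by omega] using this
end

section
/- Let S be an Arf numerical semigroup with minimal generators n₁ < n₂ < … < n_k, and suppose its blowup S' = S(n₁) has the same multiplicity n₁. Then the minimal generating set of S' is exactly {n₁, n₂ - n₁, …, n_k - n₁}. -/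
theorem stmt_8 (S : Set ℕ) (hS : IsNumericalSemigroup S) (hArf : IsArf S)
    (k : ℕ) (hk : 0 < k) (n : Fin k → ℕ) (hmono : StrictMono n)
    (hgens : minGens S = Set.range n)
    (hmult' : IsLeast {m | m ∈ shiftSet S (n ⟨0, hk⟩) ∧ m ≠ 0} (n ⟨0, hk⟩)) :
    minGens (shiftSet S (n ⟨0, hk⟩))
      = {n ⟨0, hk⟩} ∪ (fun i => n i - n ⟨0, hk⟩) '' {i | i ≠ ⟨0, hk⟩} := by
  set n0 := n ⟨0, hk⟩ with hn0def
  have hclos : ∀ a ∈ S, ∀ b ∈ S, a + b ∈ S := hS.2.1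
  -- n0 is a minimal generator of S
  have hn0gen : IsMinGen S n0 := by
    have : n0 ∈ minGens S := by rw [hgens]; exact ⟨⟨0, hk⟩, rfl⟩
    exact this
  have hn0S : n0 ∈ S := hn0gen.1
  have hn0ne : n0 ≠ 0 := hn0gen.2.1
  -- 2*n0 ∈ S
  have h2n0 : n0 + n0 ∈ S := hmult'.1.1
  -- every nonzero element of S is ≥ n0
  have hminS : ∀ s, s ∈ S → s ≠ 0 → n0 ≤ s := by
    intro s
    induction s using Nat.strong_induction_on with
    | _ s ih =>
      intro hs hs0
      by_contra hlt
      push_neg at hlt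
      have hgen : IsMinGen S s := by
        refine ⟨hs, hs0, ?_⟩
        rintro ⟨a, ha, b, hb, ha0, hb0, rfl⟩
        have halt : a < a + b := by omega
        have := ih a halt ha ha0
        omega
      have : s ∈ minGens S := hgen
      rw [hgens] at this
      obtain ⟨i, hi⟩ := this
      have : n0 ≤ n i := hmono.monotone (by exact Fin.mk_le_of_le_val (Nat.zero_le _))
      omega
  ext x
  constructor
  · -- forward direction
    rintro ⟨hxS', hx0, hxsum⟩
    have hxge : n0 ≤ x := hmult'.2 ⟨hxS', hx0⟩
    rcases eq_or_lt_of_le hxge with heq | hlt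
    · exact Or.inl (by simp [← heq])
    · right
      have hxn0S : x + n0 ∈ S := hxS'
      have hgenx : IsMinGen S (x + n0) := by
        refine ⟨hxn0S, by omega, ?_⟩
        rintro ⟨c, hc, d, hd, hc0, hd0, hcd⟩
        have hcge := hminS c hc hc0
        have hdge := hminS d hd hd0
        rcases eq_or_lt_of_le hdge with hdeq | hdlt
        · -- d = n0, so x = c ∈ S; decompose x = n0 + (x - n0) in S'
          have hxS : x ∈ S := by
            have : x = c := by omega
            rw [this]; exact hc
          exact hxsum ⟨n0, hmult'.1.1, x - n0,
            by show (x - n0) + n0 ∈ S; rwa [Nat.sub_add_cancel hxge],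
            hn0ne, by omega, by omega⟩
        · -- d > n0: x = c + (d - n0) in S'
          exact hxsum ⟨c, by show c + n0 ∈ S; exact hclos c hc n0 hn0S, d - n0,
            by show (d - n0) + n0 ∈ S; rwa [Nat.sub_add_cancel hdge],
            hc0, by omega, by omega⟩
      have : x + n0 ∈ minGens S := hgenx
      rw [hgens] at this
      obtain ⟨i, hi⟩ := this
      have hine : i ≠ ⟨0, hk⟩ := by
        intro h
        rw [h] at hi
        omega
      exact ⟨i, hine, by simp only []; omega⟩
  · -- backward direction
    rintro (hx | ⟨i, hi, rfl⟩)
    · -- x = n0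
      have hxeq : x = n0 := hx
      subst hxeq
      refine ⟨hmult'.1.1, hn0ne, ?_⟩
      rintro ⟨a, ha, b, hb, ha0, hb0, hab⟩
      have := hmult'.2 ⟨ha, ha0⟩
      have := hmult'.2 ⟨hb, hb0⟩
      omega
    · -- x = n i - n0, i ≠ 0
      simp only [Set.mem_setOf_eq] at hi
      have h0i : (⟨0, hk⟩ : Fin k) < i := by
        have : (i : ℕ) ≠ 0 := by
          intro h
          exact hi (Fin.ext h)
        exact Fin.mk_lt_of_lt_val (by omega)
      have hni : n0 < n i := hmono h0i
      have hniGen : IsMinGen S (n i) := by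
        have : n i ∈ minGens S := by rw [hgens]; exact ⟨i, rfl⟩
        exact this
      refine ⟨?_, by simp only []; omega, ?_⟩
      · show (n i - n0) + n0 ∈ S
        rw [Nat.sub_add_cancel hni.le]
        exact hniGen.1
      · rintro ⟨a, ha, b, hb, ha0, hb0, hab⟩
        have haS' : a + n0 ∈ S := ha
        have hbS' : b + n0 ∈ S := hb
        have hage := hmult'.2 ⟨ha, ha0⟩
        have hbge := hmult'.2 ⟨hb, hb0⟩
        have harf := hArf (a + n0) haS' (b + n0) hbS' (n0 + n0) h2n0 (by omega) (by omega)
        have habS : a + b ∈ S := by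
          have heq : (a + n0) + (b + n0) - (n0 + n0) = a + b := by omega
          rwa [heq] at harf
        simp only [] at hab
        exact hniGen.2.2 ⟨a + b, habS, n0, hn0S, by omega, hn0ne, by omega⟩
end

section
/- Let S be an Arf numerical semigroup with multiplicity n₁ and minimal generators n₁ < n₂ < … < n_k, whose blowup S' = S(n₁) also has multiplicity n₁. Then for every s ∈ ℕ with s ≠ 0 and s ∉ {n₁, …, n_k}: s ∈ S if and only if s - 2n₁ ∈ S'. -/
theorem stmt_10 (S : Set ℕ) (hS : IsNumericalSemigroup S) (hArf : IsArf S)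
    (k : ℕ) (hk : 0 < k) (n : Fin k → ℕ) (hmono : StrictMono n)
    (hgens : minGens S = Set.range n)
    (hmult' : IsLeast {m | m ∈ shiftSet S (n ⟨0, hk⟩) ∧ m ≠ 0} (n ⟨0, hk⟩)) :
    ∀ s : ℕ, s ≠ 0 → s ∉ Set.range n →
      (s ∈ S ↔ 2 * n ⟨0, hk⟩ ≤ s ∧ s - 2 * n ⟨0, hk⟩ ∈ shiftSet S (n ⟨0, hk⟩)) := by
  intro s hs hsnot
  set n1 := n ⟨0, hk⟩ with hn1
  have hn1gen : IsMinGen S n1 := by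
    have : n1 ∈ minGens S := by rw [hgens]; exact ⟨⟨0, hk⟩, rfl⟩
    exact this
  obtain ⟨hn1S, hn1ne, -⟩ := hn1gen
  have hmin : ∀ x, x ∈ S → x ≠ 0 → n1 ≤ x := by
    intro x
    induction x using Nat.strong_induction_on with
    | _ x ih =>
      intro hx hxne
      by_cases hgen : IsMinGen S x
      · have hx' : x ∈ Set.range n := by rw [← hgens]; exact hgen
        obtain ⟨i, hi⟩ := hx'
        have : n ⟨0, hk⟩ ≤ n i := hmono.monotone (by simp [Fin.le_def])
        omega
      · have : ¬ (x ∈ S ∧ x ≠ 0 ∧ ¬ ∃ a ∈ S, ∃ b ∈ S, a ≠ 0 ∧ b ≠ 0 ∧ x = a + b) := hgen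
        push_neg at this
        obtain ⟨a, ha, b, hb, hane, hbne, hab⟩ := this hx hxne
        have h1 : n1 ≤ a := ih a (by omega) ha hane
        omega
  constructor
  · intro hsS
    have hnotgen : ¬ IsMinGen S s := by
      intro h
      exact hsnot (by rw [← hgens]; exact h)
    have : ¬ (s ∈ S ∧ s ≠ 0 ∧ ¬ ∃ a ∈ S, ∃ b ∈ S, a ≠ 0 ∧ b ≠ 0 ∧ s = a + b) := hnotgen
    push_neg at this
    obtain ⟨a, ha, b, hb, hane, hbne, hab⟩ := this hsS hs
    have h1 : n1 ≤ a := hmin a ha hane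
    have h2 : n1 ≤ b := hmin b hb hbne
    refine ⟨by omega, ?_⟩
    have harf := hArf a ha b hb n1 hn1S h1 h2
    have heq : s - 2 * n1 + n1 = a + b - n1 := by omega
    show s - 2 * n1 + n1 ∈ S
    rw [heq]; exact harf
  · rintro ⟨hle, hmem⟩
    have hmem' : s - 2 * n1 + n1 ∈ S := hmem
    have := hS.2.1 _ hmem' _ hn1S
    have heq : s - 2 * n1 + n1 + n1 = s := by omega
    rwa [heq] at this
end

section
/- Let S be an Arf numerical semigroup with multiplicity n₁ and minimal generators n₁ < n₂ < … < n_k, whose blowup S' = S(n₁) also has multiplicity n₁. Then for every s ∈ ℕ with s ∉ {n_l - n₁ : l = 2, …, k}: s ∈ S if and only if s ∈ S'. -/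
theorem stmt_11 (S : Set ℕ) (hS : IsNumericalSemigroup S) (hArf : IsArf S)
    (k : ℕ) (hk : 0 < k) (n : Fin k → ℕ) (hmono : StrictMono n)
    (hgens : minGens S = Set.range n)
    (hmult' : IsLeast {m | m ∈ shiftSet S (n ⟨0, hk⟩) ∧ m ≠ 0} (n ⟨0, hk⟩)) :
    ∀ s : ℕ, (¬ ∃ l : Fin k, l ≠ ⟨0, hk⟩ ∧ s = n l - n ⟨0, hk⟩) →
      (s ∈ S ↔ s ∈ shiftSet S (n ⟨0, hk⟩)) := by
  intro s hs
  set n1 := n ⟨0, hk⟩ with hn1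
  have hn1G : n1 ∈ minGens S := hgens ▸ ⟨⟨0, hk⟩, rfl⟩
  have hn1S : n1 ∈ S := hn1G.1
  have hmin : ∀ m ∈ S, m ≠ 0 → n1 ≤ m := by
    intro m
    induction m using Nat.strong_induction_on with
    | _ m ih =>
      intro hm hm0
      by_cases hgen : IsMinGen S m
      · have hr : m ∈ Set.range n := hgens ▸ hgen
        obtain ⟨l, rfl⟩ := hr
        exact hmono.monotone (Fin.le_def.2 (Nat.zero_le _))
      · have : ∃ a ∈ S, ∃ b ∈ S, a ≠ 0 ∧ b ≠ 0 ∧ m = a + b := by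
          by_contra h
          exact hgen ⟨hm, hm0, h⟩
        obtain ⟨a, ha, b, hb, ha0, hb0, hab⟩ := this
        have : n1 ≤ a := ih a (by omega) ha ha0
        omega
  constructor
  · intro hsS
    exact hS.2.1 s hsS n1 hn1S
  · intro hs'
    have hsn : s + n1 ∈ S := hs'
    by_cases h0 : s = 0
    · subst h0; exact hS.1
    by_cases hgen : IsMinGen S (s + n1)
    · have hr : s + n1 ∈ Set.range n := hgens ▸ hgen
      obtain ⟨l, hl⟩ := hr
      exfalso; apply hs
      refine ⟨l, ?_, by omega⟩
      intro he
      rw [he, ← hn1] at hl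
      omega
    · have : ∃ a ∈ S, ∃ b ∈ S, a ≠ 0 ∧ b ≠ 0 ∧ s + n1 = a + b := by
        by_contra h
        exact hgen ⟨hsn, by omega, h⟩
      obtain ⟨a, ha, b, hb, ha0, hb0, hab⟩ := this
      have h1 := hmin a ha ha0
      have h2 := hmin b hb hb0
      have hA := hArf a ha b hb n1 hn1S h1 h2
      have : s = a + b - n1 := by omega
      rwa [this]
end

section
/- Let S be an Arf numerical semigroup with multiplicity n₁, minimal generators n₁ < n₂ < … < n_k, and blowup S' = S(n₁) of the same multiplicity n₁. Then for each l ∈ {2, …, k}, n_l - 2n₁ ∉ S' (equivalently, n_l - n₁ is a minimal generator of S'). -/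
theorem stmt_13 (S : Set ℕ) (hS : IsNumericalSemigroup S) (hArf : IsArf S)
    (k : ℕ) (hk : 0 < k) (n : Fin k → ℕ) (hmono : StrictMono n)
    (hgens : minGens S = Set.range n)
    (hmult' : IsLeast {m | m ∈ shiftSet S (n ⟨0, hk⟩) ∧ m ≠ 0} (n ⟨0, hk⟩)) :
    ∀ l : Fin k, l ≠ ⟨0, hk⟩ →
      n l - 2 * n ⟨0, hk⟩ ∉ shiftSet S (n ⟨0, hk⟩)
        ∧ IsMinGen (shiftSet S (n ⟨0, hk⟩)) (n l - n ⟨0, hk⟩) := by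
  intro l hl
  set n1 := n ⟨0, hk⟩ with hn1def
  have hle : (⟨0, hk⟩ : Fin k) ≤ l := by
    simp [Fin.le_def]
  have hlt : (⟨0, hk⟩ : Fin k) < l := hle.lt_of_ne (Ne.symm hl)
  have hnl : n1 < n l := hmono hlt
  have hml : IsMinGen S (n l) := by
    have : n l ∈ minGens S := by rw [hgens]; exact ⟨l, rfl⟩
    exact this
  have hm1 : IsMinGen S n1 := by
    have : n1 ∈ minGens S := by rw [hgens]; exact ⟨⟨0, hk⟩, rfl⟩
    exact this
  have hn1S : n1 ∈ S := hm1.1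
  have hn1ne : n1 ≠ 0 := hm1.2.1
  have h1 : n l - n1 ∈ shiftSet S n1 := by
    show (n l - n1) + n1 ∈ S
    rw [Nat.sub_add_cancel hnl.le]
    exact hml.1
  have h2 : n l - n1 ≠ 0 := Nat.sub_ne_zero_of_lt hnl
  have hge : n1 ≤ n l - n1 := hmult'.2 ⟨h1, h2⟩
  have hge2 : 2 * n1 ≤ n l := by omega
  have key : n l - n1 ∉ S := by
    intro h
    exact hml.2.2 ⟨n l - n1, h, n1, hn1S, h2, hn1ne,
      (Nat.sub_add_cancel hnl.le).symm⟩
  have goal1 : n l - 2 * n1 ∉ shiftSet S n1 := by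
    intro h
    have h' : (n l - 2 * n1) + n1 ∈ S := h
    have heq : (n l - 2 * n1) + n1 = n l - n1 := by omega
    rw [heq] at h'
    exact key h'
  refine ⟨goal1, h1, h2, ?_⟩
  rintro ⟨a, ha, b, hb, ha0, hb0, heq⟩
  have han1 : n1 ≤ a := hmult'.2 ⟨ha, ha0⟩
  have hbn1 : n1 ≤ b := hmult'.2 ⟨hb, hb0⟩
  have h2n1 : n1 + n1 ∈ S := hmult'.1.1
  have hab : a + b ∈ S := by
    have := hArf (a + n1) ha (b + n1) hb (n1 + n1) h2n1
      (by omega) (by omega)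
    have heq2 : a + n1 + (b + n1) - (n1 + n1) = a + b := by omega
    rwa [heq2] at this
  apply key
  rw [heq]
  exact hab
end

section
/- Let S be an Arf numerical semigroup with multiplicity n whose blowup S' also has multiplicity n, with minimal generators n₁ < … < n_k of S (so S' has minimal generators n₁, n₂-n₁, …, n_k-n₁). For s ∈ ℕ and t = s + (i+1)n₁, and for a subset {j₁,…,j_m} ⊆ {2,…,k} of size m = i+1 not containing 1: {j₁,…,j_m} is a face of Δ_t(S) if and only if it is a face of Δ_s(S'), unless t - n_{j₁} - … - n_{j_m} = n_l - n₁ for some l ≥ 2. -/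
/-- F is a face of Δ_s: s - Σ_{j ∈ F} n j ∈ S (stated additively). -/
def isFace (S : Set ℕ) {k : ℕ} (n : Fin k → ℕ) (s : ℕ) (F : Finset (Fin k)) : Prop :=
  ∃ u ∈ S, s = u + ∑ j ∈ F, n j

theorem stmt_15 (S : Set ℕ) (hS : IsNumericalSemigroup S) (hArf : IsArf S)
    (k : ℕ) (hk : 0 < k) (n : Fin k → ℕ) (hmono : StrictMono n)
    (hgens : minGens S = Set.range n)
    (hmult' : IsLeast {m | m ∈ shiftSet S (n ⟨0, hk⟩) ∧ m ≠ 0} (n ⟨0, hk⟩))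
    (s i : ℕ) (t : ℕ) (ht : t = s + (i + 1) * n ⟨0, hk⟩)
    (F : Finset (Fin k)) (hFcard : F.card = i + 1) (hF1 : ⟨0, hk⟩ ∉ F)
    (hexc : ¬ ∃ l : Fin k, l ≠ ⟨0, hk⟩ ∧ t = (n l - n ⟨0, hk⟩) + ∑ j ∈ F, n j) :
    isFace S n t F ↔ isFace (shiftSet S (n ⟨0, hk⟩)) (fun j => n j - n ⟨0, hk⟩) s F := by
  set n0 := n ⟨0, hk⟩ with hn0
  have hclosed := hS.2.1
  have hn0S : n0 ∈ S := by
    have : n0 ∈ minGens S := hgens ▸ Set.mem_range_self _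
    exact this.1
  -- every nonzero element of S is ≥ n0
  have hmin : ∀ x ∈ S, x ≠ 0 → n0 ≤ x := by
    intro x hx hx0
    exact hmult'.2 ⟨show x + n0 ∈ S from hclosed x hx n0 hn0S, hx0⟩
  have hge : ∀ j ∈ F, n0 ≤ n j := by
    intro j hj
    exact hmono.monotone (by simp [Fin.le_def])
  have hsum : ∑ j ∈ F, n j = (∑ j ∈ F, (n j - n0)) + (i + 1) * n0 := by
    calc ∑ j ∈ F, n j = ∑ j ∈ F, ((n j - n0) + n0) :=
          Finset.sum_congr rfl fun j hj => (Nat.sub_add_cancel (hge j hj)).symm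
      _ = (∑ j ∈ F, (n j - n0)) + F.card * n0 := by
          rw [Finset.sum_add_distrib, Finset.sum_const, smul_eq_mul]
      _ = _ := by rw [hFcard]
  constructor
  · rintro ⟨u, huS, hu⟩
    refine ⟨u, show u + n0 ∈ S from hclosed u huS n0 hn0S, ?_⟩
    show s = u + ∑ j ∈ F, (n j - n0)
    omega
  · rintro ⟨u, huS', hu⟩
    have huS'' : u + n0 ∈ S := huS'
    replace hu : s = u + ∑ j ∈ F, (n j - n0) := hu
    have hT : t = u + ∑ j ∈ F, n j := by omega
    by_cases hu0 : u = 0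
    · exact ⟨0, hS.1, by omega⟩
    by_cases hmg : u + n0 ∈ minGens S
    · obtain ⟨l, hl⟩ : u + n0 ∈ Set.range n := hgens ▸ hmg
      have hl0 : l ≠ ⟨0, hk⟩ := by
        intro h
        rw [h] at hl
        omega
      exact absurd ⟨l, hl0, by omega⟩ hexc
    · have : ∃ a ∈ S, ∃ b ∈ S, a ≠ 0 ∧ b ≠ 0 ∧ u + n0 = a + b := by
        by_contra h
        exact hmg ⟨huS'', by omega, h⟩
      obtain ⟨a, haS, b, hbS, ha0, hb0, hab⟩ := this
      have hu' : u = a + b - n0 := by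
        have := hmin a haS ha0
        omega
      have : a + b - n0 ∈ S := hArf a haS b hbS n0 hn0S (hmin a haS ha0) (hmin b hbS hb0)
      exact ⟨u, hu' ▸ this, hT⟩
end
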